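/- Let A be a left brace such that A³ = ⟨0⟩, and suppose A is generated as a brace by an element a. Put a₁ = a, a₂ = a₁ ⋆ a, a₃ = a₂ ⋆ a. Then A is nilpotent in the sense of Smoktunowicz; more precisely: if a₃ = 0 then A^{(3)} = ⟨0⟩ = A³ (i.e. A ∈ 𝒩_S(3,3)), and if a₃ ≠ 0 then A^{(4)} = ⟨0⟩ and A³ = ⟨0⟩ with A^{(3)} ≠ ⟨0⟩ (i.e. A ∈ 𝒩_S(4,3)). -/

import Mathlib

/-- A left brace: `(A, +)` is an abelian group, `(A, *)` is a group, and
`a * (b + c) = a * b + a * c - a` for all `a b c`. -/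
class LeftBrace (A : Type*) extends AddCommGroup A, Group A where
  mul_add_eq : ∀ a b c : A, a * (b + c) = a * b + a * c - a

namespace LeftBrace

variable {A : Type*} [LeftBrace A]

/-- The star operation of a left brace: `a ⋆ b = a * b - a - b`. -/
def star (a b : A) : A := a * b - a - b

/-- `K ⋆ L`: the subgroup of the additive group of `A` generated by all
`x ⋆ y` with `x ∈ K`, `y ∈ L`. -/
def setStar (K L : Set A) : AddSubgroup A :=
  AddSubgroup.closure (Set.image2 star K L)

/-- A subbrace of `A`: a subset that is simultaneously a subgroup of the
additive group of `A` and a subgroup of the multiplicative group of `A`. -/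
def IsSubbrace (S : Set A) : Prop :=
  (0 : A) ∈ S ∧ (∀ x ∈ S, ∀ y ∈ S, x + y ∈ S) ∧ (∀ x ∈ S, -x ∈ S) ∧
    (1 : A) ∈ S ∧ (∀ x ∈ S, ∀ y ∈ S, x * y ∈ S) ∧ (∀ x ∈ S, x⁻¹ ∈ S)

/-- A left ideal of `A`: a subbrace `S` with `a ⋆ b ∈ S` for all `a ∈ A`, `b ∈ S`. -/
def IsLeftIdeal (S : Set A) : Prop :=
  IsSubbrace S ∧ ∀ a : A, ∀ b ∈ S, star a b ∈ S

/-- An ideal of `A`: a subbrace `S` with `a ⋆ z ∈ S` and `z ⋆ a ∈ S`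
for all `a ∈ A`, `z ∈ S`. -/
def IsIdeal (S : Set A) : Prop :=
  IsSubbrace S ∧ ∀ a : A, ∀ z ∈ S, star a z ∈ S ∧ star z a ∈ S

/-- The left series of the brace `A`, with the indexing shifted by one:
`leftSeriesN A 0 = A¹ = A` and `leftSeriesN A n = Aⁿ⁺¹ = A ⋆ Aⁿ`.
In particular `leftSeriesN A 1 = A²` and `leftSeriesN A 2 = A³`. -/
def leftSeriesN (A : Type*) [LeftBrace A] : ℕ → AddSubgroup A
  | 0 => ⊤
  | n + 1 => setStar Set.univ ((leftSeriesN A n : AddSubgroup A) : Set A)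

/-- The right series of the brace `A`, with the indexing shifted by one:
`rightSeriesN A 0 = A⁽¹⁾ = A` and `rightSeriesN A n = A⁽ⁿ⁺¹⁾ = A⁽ⁿ⁾ ⋆ A`.
In particular `rightSeriesN A 2 = A⁽³⁾` and `rightSeriesN A 3 = A⁽⁴⁾`. -/
def rightSeriesN (A : Type*) [LeftBrace A] : ℕ → AddSubgroup A
  | 0 => ⊤
  | n + 1 => setStar ((rightSeriesN A n : AddSubgroup A) : Set A) Set.univ

end LeftBrace

open LeftBrace

/-!
Since `x y ≡ x + y` modulo `A²`, every additive subgroup containing `A²` is a subbrace, so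
`A = ℤa + A²`, and `aⁿ ≡ n a` modulo `A²`. Since `A³ = 0`, the map `x ↦ x ⋆ c` is a
homomorphism from `(A, ·)` to `(A, +)`, and for `u ∈ A²` the element `u ⋆ x = u⁻¹ x⁻¹ u x`
is a commutator, so `(u ⋆ x) ⋆ c = 0`. Consequently `x ⋆ y ∈ ℤ (x ⋆ a)`, the elements `u ⋆ a` with `u ∈ A²`
lie in `ℤ a₃`, so `A⁽³⁾ = ℤ a₃`, and `A⁽⁴⁾ = ℤ (a₃ ⋆ A) = 0`.
-/

namespace LeftBrace

variable {A : Type*} [LeftBrace A]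

theorem one_eq_zero : (1 : A) = 0 := by
  have h := mul_add_eq (1 : A) 0 0
  rw [one_mul, one_mul, add_zero, zero_sub, zero_eq_neg] at h
  exact h

theorem mul_eq_add_add_star (x y : A) : x * y = x + y + star x y := by
  rw [star]; abel

theorem star_add_right (x b c : A) : star x (b + c) = star x b + star x c := by
  simp only [star, mul_add_eq]; abel

theorem star_zsmul_right (x b : A) (n : ℤ) : star x (n • b) = n • star x b :=
  map_zsmul (AddMonoidHom.mk' (star x) (star_add_right x)) n b

theorem mul_sub_eq (x b c : A) : x * (b - c) = x * b - x * c + x := by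
  have h := mul_add_eq x (b - c) c
  rw [sub_add_cancel] at h
  rw [h]; abel

theorem star_one_left (c : A) : star 1 c = 0 := by
  rw [star, one_mul, one_eq_zero]; abel

theorem star_mul_left (x y c : A) :
    star (x * y) c = star x (star y c) + star y c + star x c := by
  simp only [star, mul_assoc, mul_sub_eq]
  abel

theorem star_mem_setStar {K L : Set A} {x y : A} (hx : x ∈ K) (hy : y ∈ L) :
    star x y ∈ setStar K L :=
  AddSubgroup.subset_closure (Set.mem_image2_of_mem hx hy)

theorem setStar_le_iff {K L : Set A} {H : AddSubgroup A} :
    setStar K L ≤ H ↔ ∀ x ∈ K, ∀ y ∈ L, star x y ∈ H := by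
  rw [setStar, AddSubgroup.closure_le, Set.image2_subset_iff]; rfl

theorem star_mem_leftSeriesN_one (x y : A) : star x y ∈ leftSeriesN A 1 :=
  star_mem_setStar (Set.mem_univ x) (Set.mem_univ y)

theorem isSubbrace_of_le {H : AddSubgroup A} (hH : leftSeriesN A 1 ≤ H) :
    IsSubbrace (H : Set A) := by
  have hstar (x y : A) : star x y ∈ H := hH (star_mem_leftSeriesN_one x y)
  refine ⟨H.zero_mem, fun _ hx _ hy => H.add_mem hx hy, fun _ hx => H.neg_mem hx,
    one_eq_zero (A := A) ▸ H.zero_mem, fun x hx y hy => ?_, fun x hx => ?_⟩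
  · rw [SetLike.mem_coe, mul_eq_add_add_star]
    exact add_mem (add_mem hx hy) (hstar x y)
  · have h : x⁻¹ = x * x⁻¹ - x - star x x⁻¹ := by rw [mul_eq_add_add_star]; abel
    rw [SetLike.mem_coe, h, mul_inv_cancel, one_eq_zero]
    exact sub_mem (sub_mem H.zero_mem hx) (hstar x x⁻¹)

def toQuotient : A →* Multiplicative (A ⧸ leftSeriesN A 1) :=
  MonoidHom.mk' (fun x => Multiplicative.ofAdd (x : A ⧸ leftSeriesN A 1)) fun x y => by
    rw [mul_eq_add_add_star, QuotientAddGroup.mk_add,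
      (QuotientAddGroup.eq_zero_iff _).2 (star_mem_leftSeriesN_one x y), add_zero]
    rfl

theorem zpow_sub_zsmul_mem (x : A) (n : ℤ) : x ^ n - n • x ∈ leftSeriesN A 1 := by
  rw [← QuotientAddGroup.eq_iff_sub_mem, QuotientAddGroup.mk_zsmul]
  exact congrArg Multiplicative.toAdd (map_zpow toQuotient x n)

theorem exists_zsmul_sub_mem {a : A} (hgen : ∀ S : Set A, IsSubbrace S → a ∈ S → S = Set.univ)
    (x : A) : ∃ n : ℤ, x - n • a ∈ leftSeriesN A 1 := by
  set H := AddSubgroup.zmultiples a ⊔ leftSeriesN A 1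
  have hH : (H : Set A) = Set.univ := hgen _ (isSubbrace_of_le le_sup_right)
    (AddSubgroup.mem_sup_left (AddSubgroup.mem_zmultiples a))
  have hx : x ∈ H := by rw [← SetLike.mem_coe, hH]; trivial
  obtain ⟨_, ⟨n, rfl⟩, w, hw, rfl⟩ := AddSubgroup.mem_sup.1 hx
  exact ⟨n, by rwa [add_sub_cancel_left]⟩

theorem exists_zpow_sub_mem {a : A} (hgen : ∀ S : Set A, IsSubbrace S → a ∈ S → S = Set.univ)
    (x : A) : ∃ n : ℤ, x - a ^ n ∈ leftSeriesN A 1 := by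
  obtain ⟨n, hn⟩ := exists_zsmul_sub_mem hgen x
  exact ⟨n, sub_sub_sub_cancel_right x (a ^ n) (n • a) ▸ sub_mem hn (zpow_sub_zsmul_mem a n)⟩

theorem star_eq_zero_of_mem (h3 : leftSeriesN A 2 = ⊥) (x : A) {u : A}
    (hu : u ∈ leftSeriesN A 1) : star x u = 0 := by
  have h : star x u ∈ leftSeriesN A 2 := star_mem_setStar (Set.mem_univ x) hu
  rwa [h3, AddSubgroup.mem_bot] at h

theorem exists_star_eq_zsmul_star (h3 : leftSeriesN A 2 = ⊥) {a : A}
    (hgen : ∀ S : Set A, IsSubbrace S → a ∈ S → S = Set.univ) (x y : A) :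
    ∃ n : ℤ, star x y = n • star x a := by
  obtain ⟨n, hn⟩ := exists_zsmul_sub_mem hgen y
  refine ⟨n, ?_⟩
  rw [← sub_add_cancel y (n • a), star_add_right, star_eq_zero_of_mem h3 x hn, zero_add,
    star_zsmul_right]

theorem mul_eq_add_of_mem (h3 : leftSeriesN A 2 = ⊥) (x : A) {u : A}
    (hu : u ∈ leftSeriesN A 1) : x * u = x + u := by
  rw [mul_eq_add_add_star, star_eq_zero_of_mem h3 x hu, add_zero]

theorem star_mul_left_of_cube_eq_bot (h3 : leftSeriesN A 2 = ⊥) (x y c : A) :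
    star (x * y) c = star x c + star y c := by
  rw [star_mul_left, star_eq_zero_of_mem h3 x (star_mem_leftSeriesN_one y c), zero_add,
    add_comm]

def starLeftHom (h3 : leftSeriesN A 2 = ⊥) (c : A) : A →* Multiplicative A :=
  MonoidHom.mk' (fun x => Multiplicative.ofAdd (star x c)) fun x y => by
    rw [star_mul_left_of_cube_eq_bot h3]; rfl

theorem star_zpow_left (h3 : leftSeriesN A 2 = ⊥) (x c : A) (n : ℤ) :
    star (x ^ n) c = n • star x c :=
  congrArg Multiplicative.toAdd (map_zpow (starLeftHom h3 c) x n)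

theorem star_inv_left (h3 : leftSeriesN A 2 = ⊥) (x c : A) : star x⁻¹ c = -star x c :=
  congrArg Multiplicative.toAdd (map_inv (starLeftHom h3 c) x)

theorem star_add_left_of_mem (h3 : leftSeriesN A 2 = ⊥) (x : A) {u : A}
    (hu : u ∈ leftSeriesN A 1) (c : A) : star (x + u) c = star x c + star u c := by
  rw [← mul_eq_add_of_mem h3 x hu, star_mul_left_of_cube_eq_bot h3]

def starLeftAddHom (h3 : leftSeriesN A 2 = ⊥) (c : A) : leftSeriesN A 1 →+ A :=
  AddMonoidHom.mk' (fun u => star (u : A) c) fun u v => star_add_left_of_mem h3 u v.2 c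

theorem star_neg_left_of_mem (h3 : leftSeriesN A 2 = ⊥) {u : A} (hu : u ∈ leftSeriesN A 1)
    (c : A) : star (-u) c = -star u c :=
  map_neg (starLeftAddHom h3 c) ⟨u, hu⟩

theorem star_zsmul_left_of_mem (h3 : leftSeriesN A 2 = ⊥) {u : A} (hu : u ∈ leftSeriesN A 1)
    (n : ℤ) (c : A) : star (n • u) c = n • star u c :=
  map_zsmul (starLeftAddHom h3 c) n ⟨u, hu⟩

theorem star_eq_commutator (h3 : leftSeriesN A 2 = ⊥) {u : A} (hu : u ∈ leftSeriesN A 1)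
    (x : A) : star u x = u⁻¹ * x⁻¹ * u * x := by
  have h : x * u * star u x = u * x := by
    rw [mul_eq_add_of_mem h3 _ (star_mem_leftSeriesN_one u x), mul_eq_add_of_mem h3 x hu,
      mul_eq_add_add_star u x]
    abel
  rw [eq_inv_mul_of_mul_eq h]
  group

theorem star_star_eq_zero (h3 : leftSeriesN A 2 = ⊥) {u : A} (hu : u ∈ leftSeriesN A 1)
    (x c : A) : star (star u x) c = 0 := by
  simp only [star_eq_commutator h3 hu, star_mul_left_of_cube_eq_bot h3, star_inv_left h3]
  abel

theorem star_star_mem_zmultiples (h3 : leftSeriesN A 2 = ⊥) {a : A}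
    (hgen : ∀ S : Set A, IsSubbrace S → a ∈ S → S = Set.univ) (x y : A) :
    star (star x y) a ∈ AddSubgroup.zmultiples (star (star a a) a) := by
  obtain ⟨n, hy⟩ := exists_star_eq_zsmul_star h3 hgen x y
  obtain ⟨m, hx⟩ := exists_zpow_sub_mem hgen x
  have hxa : star x a = m • star a a + star (x - a ^ m) a := by
    rw [← star_zpow_left h3, ← star_add_left_of_mem h3 _ hx, add_sub_cancel]
  have ha₂ := star_mem_leftSeriesN_one a a
  have hw := star_mem_leftSeriesN_one (x - a ^ m) a
  refine AddSubgroup.mem_zmultiples_iff.2 ⟨n * m, ?_⟩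
  rw [hy, hxa, star_zsmul_left_of_mem h3 (add_mem (zsmul_mem ha₂ m) hw),
    star_add_left_of_mem h3 _ hw, star_zsmul_left_of_mem h3 ha₂,
    star_star_eq_zero h3 hx, add_zero, mul_zsmul]

theorem star_mem_zmultiples_of_mem (h3 : leftSeriesN A 2 = ⊥) {a : A}
    (hgen : ∀ S : Set A, IsSubbrace S → a ∈ S → S = Set.univ) {u : A}
    (hu : u ∈ leftSeriesN A 1) : star u a ∈ AddSubgroup.zmultiples (star (star a a) a) := by
  induction hu using AddSubgroup.closure_induction with
  | mem _ h =>
    obtain ⟨x, -, y, -, rfl⟩ := h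
    exact star_star_mem_zmultiples h3 hgen x y
  | zero => rw [← one_eq_zero, star_one_left]; exact zero_mem _
  | add u v _ hv hu' hv' => rw [star_add_left_of_mem h3 u hv]; exact add_mem hu' hv'
  | neg u hu hu' => rw [star_neg_left_of_mem h3 hu]; exact neg_mem hu'

theorem rightSeriesN_two_eq_zmultiples (h3 : leftSeriesN A 2 = ⊥) {a : A}
    (hgen : ∀ S : Set A, IsSubbrace S → a ∈ S → S = Set.univ) :
    rightSeriesN A 2 = AddSubgroup.zmultiples (star (star a a) a) := by
  refine le_antisymm (setStar_le_iff.2 fun u hu y _ => ?_) ?_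
  · obtain ⟨n, hn⟩ := exists_star_eq_zsmul_star h3 hgen u y
    rw [hn]
    exact zsmul_mem (star_mem_zmultiples_of_mem h3 hgen hu) n
  · rw [AddSubgroup.zmultiples_le]
    exact star_mem_setStar (star_mem_leftSeriesN_one a a) (Set.mem_univ a)

theorem rightSeriesN_three_eq_bot (h3 : leftSeriesN A 2 = ⊥) {a : A}
    (hgen : ∀ S : Set A, IsSubbrace S → a ∈ S → S = Set.univ) : rightSeriesN A 3 = ⊥ := by
  refine eq_bot_iff.2 (setStar_le_iff.2 fun v hv y _ => ?_)
  rw [SetLike.mem_coe, rightSeriesN_two_eq_zmultiples h3 hgen] at hv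
  obtain ⟨k, rfl⟩ := hv
  rw [star_zsmul_left_of_mem h3 (star_mem_leftSeriesN_one _ _),
    star_star_eq_zero h3 (star_mem_leftSeriesN_one a a), smul_zero]
  exact zero_mem _

end LeftBrace

/-- **Theorem A, second part.** Let `A` be a left brace with
`A³ = ⟨0⟩` (here `A³ = A ⋆ (A ⋆ A) = leftSeriesN A 2` and
`A⁽³⁾ = rightSeriesN A 2`, `A⁽⁴⁾ = rightSeriesN A 3`), generated as a brace by
the element `a`.  Put `a₁ = a`, `a₂ = a₁ ⋆ a`, `a₃ = a₂ ⋆ a`.  Then `A` is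
nilpotent in the sense of Smoktunowicz; more precisely: if `a₃ = 0` then
`A⁽³⁾ = ⟨0⟩ = A³` (so `A ∈ 𝒩_S(3,3)`), and if `a₃ ≠ 0` then `A⁽⁴⁾ = ⟨0⟩` and
`A³ = ⟨0⟩` with `A⁽³⁾ ≠ ⟨0⟩` (so `A ∈ 𝒩_S(4,3)`). -/
theorem one_generator_nilpotent {A : Type*} [LeftBrace A] (a : A)
    (h3 : leftSeriesN A 2 = ⊥)
    (hgen : ∀ S : Set A, IsSubbrace S → a ∈ S → S = Set.univ) :
    (star (star a a) a = 0 →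
      rightSeriesN A 2 = ⊥ ∧ leftSeriesN A 2 = ⊥) ∧
    (star (star a a) a ≠ 0 →
      rightSeriesN A 3 = ⊥ ∧ leftSeriesN A 2 = ⊥ ∧ rightSeriesN A 2 ≠ ⊥) := by
  have hA3 := rightSeriesN_two_eq_zmultiples h3 hgen
  refine ⟨fun ha₃ => ⟨?_, h3⟩, fun ha₃ => ⟨rightSeriesN_three_eq_bot h3 hgen, h3, ?_⟩⟩
  · rw [hA3, ha₃, AddSubgroup.zmultiples_zero_eq_bot]
  · rwa [hA3, Ne, AddSubgroup.zmultiples_eq_bot]
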